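/- Let X be a Banach space, T > 0, let M : [0,T] → ℝ be continuous with resolvent kernel R, and let f, g : [0,T] → X be continuous. Then g(t) = f(t) + ∫₀ᵗ M(t−s) f(s) ds for all t ∈ [0,T] if and only if f(t) = g(t) − ∫₀ᵗ R(t−s) g(s) ds for all t ∈ [0,T]. -/

import Mathlib

/-!
Write `a ⋆ c` for the Volterra convolution `t ↦ ∫₀ᵗ a (t - s) • c s ds`. The resolvent equation
says `M ⋆ R = M - R`, and since scalar convolution is commutative also `R ⋆ M = M - R`.
Convolution is associative (Fubini on the triangle `0 ≤ u ≤ s ≤ t`), so if `g = f + M ⋆ f` then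
`R ⋆ g = R ⋆ f + (R ⋆ M) ⋆ f = M ⋆ f`, i.e. `f = g - R ⋆ g`; and if `f = g - R ⋆ g` then
`M ⋆ f = M ⋆ g - (M ⋆ R) ⋆ g = R ⋆ g`, i.e. `g = f + M ⋆ f`. Since convolution on `[0, T]` only
sees values on `[0, T]`, the data may first be extended continuously to all of `ℝ`.
-/

open MeasureTheory Set Function

theorem ContinuousOn.exists_continuous_eqOn_Icc {α β : Type*} [LinearOrder α]
    [TopologicalSpace α] [OrderTopology α] [TopologicalSpace β] {a b : α} (hab : a ≤ b)
    {φ : α → β} (hφ : ContinuousOn φ (Icc a b)) :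
    ∃ ψ : α → β, Continuous ψ ∧ EqOn ψ φ (Icc a b) :=
  ⟨IccExtend hab ((Icc a b).domRestrict φ), hφ.domRestrict.Icc_extend',
    fun _ hx => IccExtend_of_mem hab _ hx⟩

theorem intervalIntegral_integral_triangle_swap {E : Type*} [NormedAddCommGroup E]
    [NormedSpace ℝ E] {F : ℝ → ℝ → E} {a b : ℝ} (hab : a ≤ b)
    (hF : IntegrableOn (uncurry F) (Icc a b ×ˢ Icc a b)) :
    ∫ s in a..b, ∫ u in a..s, F s u = ∫ u in a..b, ∫ s in u..b, F s u := by
  let G : ℝ → ℝ → E := fun s u => {p : ℝ × ℝ | p.2 ≤ p.1}.indicator (uncurry F) (s, u)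
  have hG : IntegrableOn (uncurry G) (uIoc a b ×ˢ uIoc a b) := by
    rw [uIoc_of_le hab]
    exact (hF.indicator (measurableSet_le measurable_snd measurable_fst)).mono_set
      (prod_mono Ioc_subset_Icc_self Ioc_subset_Icc_self)
  have h_inner : ∀ s ∈ Ioc a b, ∫ u in a..s, F s u = ∫ u in a..b, G s u := fun s hs => by
    rw [← intervalIntegral.integral_indicator ⟨hs.1.le, hs.2⟩]
    rfl
  have h_outer : ∀ u ∈ Ioc a b, ∫ s in u..b, F s u = ∫ s in a..b, G s u := fun u hu => by
    have h_slice : Ioc a b ∩ Ici u = Icc u b := by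
      ext s
      simp only [mem_inter_iff, mem_Ioc, mem_Ici, mem_Icc]
      exact ⟨fun h => ⟨h.2, h.1.2⟩, fun h => ⟨⟨hu.1.trans_le h.1, h.2⟩, h.1⟩⟩
    rw [intervalIntegral.integral_of_le hu.2, intervalIntegral.integral_of_le hab,
      ← integral_Icc_eq_integral_Ioc, ← h_slice, ← setIntegral_indicator measurableSet_Ici]
    rfl
  calc ∫ s in a..b, ∫ u in a..s, F s u = ∫ s in a..b, ∫ u in a..b, G s u :=
        intervalIntegral.integral_congr_ae (.of_forall fun s hs =>
          h_inner s (by rwa [uIoc_of_le hab] at hs))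
    _ = ∫ u in a..b, ∫ s in a..b, G s u := intervalIntegral_intervalIntegral_swap hG
    _ = ∫ u in a..b, ∫ s in u..b, F s u :=
        intervalIntegral.integral_congr_ae (.of_forall fun u hu =>
          (h_outer u (by rwa [uIoc_of_le hab] at hu)).symm)

section Volterra

variable {X : Type*} [NormedAddCommGroup X] [NormedSpace ℝ X]

noncomputable def volterraConv (a : ℝ → ℝ) (c : ℝ → X) (t : ℝ) : X :=
  ∫ s in (0:ℝ)..t, a (t - s) • c s

variable {a a' b : ℝ → ℝ} {c c' d : ℝ → X} {t : ℝ}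

theorem volterraConv_congr {T : ℝ} (ht : t ∈ Icc 0 T) (ha : EqOn a a' (Icc 0 T))
    (hc : EqOn c c' (Icc 0 T)) : volterraConv a c t = volterraConv a' c' t := by
  refine intervalIntegral.integral_congr fun s hs => ?_
  rw [uIcc_of_le ht.1] at hs
  simp only [ha ⟨sub_nonneg.2 hs.2, (sub_le_self t hs.1).trans ht.2⟩, hc ⟨hs.1, hs.2.trans ht.2⟩]

theorem continuous_volterraConv (ha : Continuous a) (hc : Continuous c) :
    Continuous (volterraConv a c) :=
  intervalIntegral.continuous_parametric_intervalIntegral_of_continuous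
    (f := fun t s => a (t - s) • c s) (by fun_prop) continuous_id

theorem volterraConv_add_right (ha : Continuous a) (hc : Continuous c) (hd : Continuous d) :
    volterraConv a (c + d) t = volterraConv a c t + volterraConv a d t := by
  simp only [volterraConv, Pi.add_apply, smul_add]
  exact intervalIntegral.integral_add ((by fun_prop : Continuous _).intervalIntegrable _ _)
    ((by fun_prop : Continuous _).intervalIntegrable _ _)

theorem volterraConv_sub_right (ha : Continuous a) (hc : Continuous c) (hd : Continuous d) :
    volterraConv a (c - d) t = volterraConv a c t - volterraConv a d t := by
  simp only [volterraConv, Pi.sub_apply, smul_sub]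
  exact intervalIntegral.integral_sub ((by fun_prop : Continuous _).intervalIntegrable _ _)
    ((by fun_prop : Continuous _).intervalIntegrable _ _)

theorem volterraConv_sub_left (ha : Continuous a) (hb : Continuous b) (hc : Continuous c) :
    volterraConv (a - b) c t = volterraConv a c t - volterraConv b c t := by
  simp only [volterraConv, Pi.sub_apply, sub_smul]
  exact intervalIntegral.integral_sub ((by fun_prop : Continuous _).intervalIntegrable _ _)
    ((by fun_prop : Continuous _).intervalIntegrable _ _)

theorem volterraConv_comm (a b : ℝ → ℝ) (t : ℝ) : volterraConv a b t = volterraConv b a t := by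
  simpa [volterraConv, mul_comm] using
    intervalIntegral.integral_comp_sub_left (fun s => b (t - s) * a s) t (a := 0) (b := t)

theorem volterraConv_assoc [CompleteSpace X] (ha : Continuous a) (hb : Continuous b)
    (hc : Continuous c) (ht : 0 ≤ t) :
    volterraConv a (volterraConv b c) t = volterraConv (volterraConv a b) c t := by
  have h_int : IntegrableOn (uncurry fun s u => a (t - s) • b (s - u) • c u)
      (Icc 0 t ×ˢ Icc 0 t) :=
    ((by fun_prop : Continuous _).continuousOn.integrableOn_compact
      (isCompact_Icc.prod isCompact_Icc))
  have h_slice : ∀ u, ∫ s in u..t, a (t - s) • b (s - u) • c u = volterraConv a b (t - u) • c u :=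
    fun u => by
      simp only [smul_smul, volterraConv, smul_eq_mul]
      rw [intervalIntegral.integral_smul_const, ← sub_self u,
        ← intervalIntegral.integral_comp_sub_right]
      simp only [sub_sub_sub_cancel_right]
  simp only [volterraConv, ← intervalIntegral.integral_smul]
  rw [intervalIntegral_integral_triangle_swap ht h_int]
  exact intervalIntegral.integral_congr fun u _ => h_slice u

end Volterra

section Inversion

variable {X : Type*} [NormedAddCommGroup X] [NormedSpace ℝ X] [CompleteSpace X]
  {T : ℝ} {M R : ℝ → ℝ} {f g : ℝ → X}

theorem eqOn_sub_volterraConv_of_eqOn_add (hM : Continuous M) (hR : Continuous R)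
    (hf : Continuous f) (hRM : EqOn (volterraConv R M) (M - R) (Icc 0 T))
    (hfg : EqOn g (f + volterraConv M f) (Icc 0 T)) :
    EqOn f (g - volterraConv R g) (Icc 0 T) := by
  intro t ht
  have key : volterraConv R g t = volterraConv M f t :=
    calc volterraConv R g t = volterraConv R (f + volterraConv M f) t :=
          volterraConv_congr ht (eqOn_refl _ _) hfg
      _ = volterraConv R f t + volterraConv (volterraConv R M) f t := by
          rw [volterraConv_add_right hR hf (continuous_volterraConv hM hf),
            volterraConv_assoc hR hM hf ht.1]
      _ = volterraConv R f t + volterraConv (M - R) f t := by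
          rw [volterraConv_congr ht hRM (eqOn_refl _ _)]
      _ = volterraConv M f t := by
          rw [volterraConv_sub_left hM hR hf]; abel
  rw [Pi.sub_apply, hfg ht, Pi.add_apply, key, add_sub_cancel_right]

theorem eqOn_add_volterraConv_of_eqOn_sub (hM : Continuous M) (hR : Continuous R)
    (hg : Continuous g) (hMR : EqOn (volterraConv M R) (M - R) (Icc 0 T))
    (hgf : EqOn f (g - volterraConv R g) (Icc 0 T)) :
    EqOn g (f + volterraConv M f) (Icc 0 T) := by
  intro t ht
  have key : volterraConv M f t = volterraConv R g t :=
    calc volterraConv M f t = volterraConv M (g - volterraConv R g) t :=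
          volterraConv_congr ht (eqOn_refl _ _) hgf
      _ = volterraConv M g t - volterraConv (volterraConv M R) g t := by
          rw [volterraConv_sub_right hM hg (continuous_volterraConv hR hg),
            volterraConv_assoc hM hR hg ht.1]
      _ = volterraConv M g t - volterraConv (M - R) g t := by
          rw [volterraConv_congr ht hMR (eqOn_refl _ _)]
      _ = volterraConv R g t := by
          rw [volterraConv_sub_left hM hR hg]; abel
  rw [Pi.add_apply, hgf ht, Pi.sub_apply, key, sub_add_cancel]

theorem eqOn_add_volterraConv_iff_of_resolvent (hM : Continuous M) (hR : Continuous R)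
    (hf : Continuous f) (hg : Continuous g) (hres : EqOn (R + volterraConv M R) M (Icc 0 T)) :
    EqOn g (f + volterraConv M f) (Icc 0 T) ↔ EqOn f (g - volterraConv R g) (Icc 0 T) := by
  have hMR : EqOn (volterraConv M R) (M - R) (Icc 0 T) := fun t ht => by
    rw [Pi.sub_apply, ← hres ht, Pi.add_apply, add_sub_cancel_left]
  exact ⟨eqOn_sub_volterraConv_of_eqOn_add hM hR hf fun t ht => by
      rw [volterraConv_comm, hMR ht],
    eqOn_add_volterraConv_of_eqOn_sub hM hR hg hMR⟩

end Inversion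

/-- MacCamy inversion: if `R` is the resolvent kernel of the continuous kernel `M`, then
for continuous `f, g : [0,T] → X` one has `g = f + M*f` on `[0,T]` if and only if
`f = g - R*g` on `[0,T]`. -/
theorem stmt5 {X : Type*} [NormedAddCommGroup X] [NormedSpace ℝ X] [CompleteSpace X]
    (T : ℝ) (hT : 0 < T) (M R : ℝ → ℝ)
    (hM : ContinuousOn M (Set.Icc 0 T)) (hR : ContinuousOn R (Set.Icc 0 T))
    (hres : ∀ t ∈ Set.Icc (0:ℝ) T, R t + ∫ s in (0:ℝ)..t, M (t - s) * R s = M t)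
    (f g : ℝ → X) (hf : ContinuousOn f (Set.Icc 0 T)) (hg : ContinuousOn g (Set.Icc 0 T)) :
    (∀ t ∈ Set.Icc (0:ℝ) T, g t = f t + ∫ s in (0:ℝ)..t, M (t - s) • f s) ↔
    (∀ t ∈ Set.Icc (0:ℝ) T, f t = g t - ∫ s in (0:ℝ)..t, R (t - s) • g s) := by
  obtain ⟨M', hM'c, hM'⟩ := hM.exists_continuous_eqOn_Icc hT.le
  obtain ⟨R', hR'c, hR'⟩ := hR.exists_continuous_eqOn_Icc hT.le
  obtain ⟨f', hf'c, hf'⟩ := hf.exists_continuous_eqOn_Icc hT.le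
  obtain ⟨g', hg'c, hg'⟩ := hg.exists_continuous_eqOn_Icc hT.le
  have hres' : EqOn (R' + volterraConv M' R') M' (Icc 0 T) := fun t ht => by
    rw [Pi.add_apply, hR' ht, hM' ht, volterraConv_congr ht hM' hR']
    exact hres t ht
  refine Iff.trans ?_ ((eqOn_add_volterraConv_iff_of_resolvent hM'c hR'c hf'c hg'c hres').trans ?_)
  · refine forall₂_congr fun t ht => ?_
    rw [Pi.add_apply, hg' ht, hf' ht, volterraConv_congr ht hM' hf']
    rfl
  · refine forall₂_congr fun t ht => ?_
    rw [Pi.sub_apply, hg' ht, hf' ht, volterraConv_congr ht hR' hg']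
    rfl
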